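/- arXiv:2207.04552 — 3 statements merged into one kernel-verified Lean document; each statement's English description precedes it below -/
import Mathlib

section
/- For positive real numbers κ'_1,...,κ'_{n-1} and any fixed index γ with 1 ≤ γ ≤ n-1, one has σ_{n-k-1}(κ')·σ_{n-2}(κ'|γ) > σ_{n-1}(κ')·σ_{n-k-2}(κ'|γ), where σ_j denotes the j-th elementary symmetric polynomial and (κ'|γ) denotes the tuple with the γ-th entry removed. -/
/-- The `j`-th elementary symmetric polynomial of `f` over the finite index set `s`. -/
noncomputable def esymm {ι : Type*} [DecidableEq ι] (s : Finset ι) (f : ι → ℝ) (j : ℕ) : ℝ :=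
  ∑ t ∈ s.powersetCard j, ∏ i ∈ t, f i

lemma esymm_pos {ι : Type*} [DecidableEq ι] (s : Finset ι) (f : ι → ℝ)
    (hf : ∀ i ∈ s, 0 < f i) {j : ℕ} (hj : j ≤ s.card) : 0 < esymm s f j := by
  apply Finset.sum_pos
  · intro t ht
    rw [Finset.mem_powersetCard] at ht
    exact Finset.prod_pos fun i hi => hf i (ht.1 hi)
  · exact Finset.powersetCard_nonempty.2 hj

lemma esymm_nonneg {ι : Type*} [DecidableEq ι] (s : Finset ι) (f : ι → ℝ)
    (hf : ∀ i ∈ s, 0 < f i) (j : ℕ) : 0 ≤ esymm s f j := by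
  apply Finset.sum_nonneg
  intro t ht
  rw [Finset.mem_powersetCard] at ht
  exact le_of_lt (Finset.prod_pos fun i hi => hf i (ht.1 hi))

lemma esymm_card {ι : Type*} [DecidableEq ι] (s : Finset ι) (f : ι → ℝ) :
    esymm s f s.card = ∏ i ∈ s, f i := by
  rw [esymm, Finset.powersetCard_self, Finset.sum_singleton]

lemma esymm_insert {ι : Type*} [DecidableEq ι] {a : ι} {s : Finset ι} (ha : a ∉ s)
    (f : ι → ℝ) (j : ℕ) :
    esymm (insert a s) f (j + 1) = esymm s f (j + 1) + f a * esymm s f j := by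
  rw [esymm, Finset.powersetCard_succ_insert ha, Finset.sum_union, Finset.sum_image]
  · show _ + _ = esymm s f (j+1) + _
    congr 1
    rw [esymm, Finset.mul_sum]
    apply Finset.sum_congr rfl
    intro t ht
    rw [Finset.mem_powersetCard] at ht
    rw [Finset.prod_insert fun h => ha (ht.1 h)]
  · intro t ht u hu h
    rw [Finset.mem_coe, Finset.mem_powersetCard] at ht hu
    have hat : a ∉ t := fun h' => ha (ht.1 h')
    have hau : a ∉ u := fun h' => ha (hu.1 h')
    rw [← Finset.erase_insert hat, ← Finset.erase_insert hau, h]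
  · rw [Finset.disjoint_left]
    intro t ht ht'
    rw [Finset.mem_powersetCard] at ht
    obtain ⟨u, hu, rfl⟩ := Finset.mem_image.1 ht'
    exact ha (ht.1 (Finset.mem_insert_self a u))

/-- For positive reals `κ'_1, …, κ'_{n-1}` and a fixed index `γ`, one has
`σ_{n-k-1}(κ')·σ_{n-2}(κ'|γ) > σ_{n-1}(κ')·σ_{n-k-2}(κ'|γ)`. -/
theorem stmt0 (n k : ℕ) (hn : 2 ≤ n) (hk : 1 ≤ k) (hk' : k ≤ n - 2)
    (κ : Fin (n - 1) → ℝ) (hκ : ∀ i, 0 < κ i) (γ : Fin (n - 1)) :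
    esymm Finset.univ κ (n - k - 1) * esymm (Finset.univ.erase γ) κ (n - 2)
      > esymm Finset.univ κ (n - 1) * esymm (Finset.univ.erase γ) κ (n - k - 2) := by
  have hn3 : 3 ≤ n := by omega
  set s := Finset.univ.erase γ with hs
  have hγs : γ ∉ s := Finset.notMem_erase γ _
  have hins : insert γ s = Finset.univ := Finset.insert_erase (Finset.mem_univ γ)
  have hcards : s.card = n - 2 := by
    rw [hs, Finset.card_erase_of_mem (Finset.mem_univ γ), Finset.card_univ, Fintype.card_fin]
    omega
  have hcardu : (Finset.univ : Finset (Fin (n-1))).card = n - 1 := by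
    rw [Finset.card_univ, Fintype.card_fin]
  have hP : esymm s κ (n - 2) = ∏ i ∈ s, κ i := by
    have := esymm_card s κ; rwa [hcards] at this
  have hfull : esymm Finset.univ κ (n - 1) = κ γ * ∏ i ∈ s, κ i := by
    have := esymm_card (Finset.univ : Finset (Fin (n-1))) κ
    rw [hcardu, ← Finset.mul_prod_erase _ κ (Finset.mem_univ γ)] at this
    exact this
  have h1 : n - k - 1 = (n - k - 2) + 1 := by omega
  have hrec : esymm Finset.univ κ (n - k - 1)
      = esymm s κ (n - k - 1) + κ γ * esymm s κ (n - k - 2) := by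
    rw [h1, ← hins, esymm_insert hγs, ← h1]
  have hA : 0 < esymm s κ (n - k - 1) :=
    esymm_pos s κ (fun i _ => hκ i) (by omega)
  have hB : 0 ≤ esymm s κ (n - k - 2) := esymm_nonneg s κ (fun i _ => hκ i) _
  have hPpos : 0 < ∏ i ∈ s, κ i := Finset.prod_pos fun i _ => hκ i
  rw [hrec, hP, hfull]
  nlinarith [hκ γ]
end

section
/- For an n×n symmetric matrix Λ in block form, with (n-1)×(n-1) diagonal upper-left block diag(κ'_1,...,κ'_{n-1}), last diagonal entry Λ_{nn}, and off-diagonal entries Λ_{γn}, the m-th elementary symmetric polynomial of the eigenvalues of Λ equals σ_{m-1}(κ')·Λ_{nn} + σ_m(κ') - Σ_{γ=1}^{n-1} σ_{m-2}(κ'|γ)·Λ_{γn}^2. -/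
/-- Integer-indexed elementary symmetric polynomial, with `σ_j = 0` for `j < 0`. -/
noncomputable def esymmZ {ι : Type*} [DecidableEq ι] (s : Finset ι) (f : ι → ℝ) (j : ℤ) : ℝ :=
  if j < 0 then 0 else esymm s f j.toNat

section Aux

open Polynomial Finset Matrix

lemma esymm_eq_zero {ι : Type*} [DecidableEq ι] (s : Finset ι) (f : ι → ℝ) {j : ℕ}
    (h : s.card < j) : esymm s f j = 0 := by
  rw [esymm, Finset.powersetCard_eq_empty.2 h, Finset.sum_empty]

lemma esymm_zero' {ι : Type*} [DecidableEq ι] (s : Finset ι) (f : ι → ℝ) :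
    esymm s f 0 = 1 := by simp [esymm]

lemma esymmZ_neg' {ι : Type*} [DecidableEq ι] (s : Finset ι) (f : ι → ℝ) {j : ℤ} (h : j < 0) :
    esymmZ s f j = 0 := if_pos h

lemma esymmZ_nonneg {ι : Type*} [DecidableEq ι] (s : Finset ι) (f : ι → ℝ) {j : ℤ} {n : ℕ}
    (h : j = (n : ℤ)) : esymmZ s f j = esymm s f n := by
  subst h; rw [esymmZ, if_neg (by omega), Int.toNat_natCast]

lemma esymm_eq_multiset {ι : Type*} [DecidableEq ι] (s : Finset ι) (f : ι → ℝ) (n : ℕ) :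
    esymm s f n = (s.val.map f).esymm n := by
  rw [Finset.esymm_map_val]; rfl

lemma coeff_prod_X_sub_C {ι : Type*} [DecidableEq ι] (s : Finset ι) (f : ι → ℝ) {k : ℕ}
    (h : k ≤ s.card) :
    (∏ i ∈ s, (X - C (f i))).coeff k = (-1)^(s.card - k) * esymm s f (s.card - k) := by
  rw [Finset.prod_eq_multiset_prod]
  rw [show (s.val.map fun i => X - C (f i)) = (s.val.map f).map (fun t => X - C t) by
    rw [Multiset.map_map]; rfl]
  rw [Multiset.prod_X_sub_C_coeff _ (by simpa using h)]
  rw [esymm_eq_multiset]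
  simp

lemma natDegree_prod_X_sub_C' {ι : Type*} [DecidableEq ι] (s : Finset ι) (f : ι → ℝ) :
    (∏ i ∈ s, (X - C (f i))).natDegree = s.card := by
  rw [Finset.prod_eq_multiset_prod]
  rw [show (s.val.map fun i => X - C (f i)) = (s.val.map f).map (fun t => X - C t) by
    rw [Multiset.map_map]; rfl]
  simpa using Polynomial.natDegree_multiset_prod_X_sub_C_eq_card (s.val.map f)

lemma det_aux (p : ℕ) (κ Λn : Fin p → ℝ) (Λnn x : ℝ) (hx : ∀ i, x - κ i ≠ 0) :
    (Matrix.fromBlocks (Matrix.diagonal fun i => x - κ i)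
      (Matrix.of fun i (_ : Unit) => -Λn i) (Matrix.of fun (_ : Unit) j => -Λn j)
      (Matrix.of fun (_ : Unit) (_ : Unit) => x - Λnn)).det
    = (∏ i, (x - κ i)) * (x - Λnn) - ∑ γ, (Λn γ)^2 * ∏ i ∈ Finset.univ.erase γ, (x - κ i) := by
  haveI : Invertible (Matrix.diagonal fun i => x - κ i) :=
    Matrix.invertibleOfIsUnitDet _ (by
      rw [Matrix.det_diagonal]
      exact (Finset.prod_ne_zero_iff.2 fun i _ => hx i).isUnit)
  have hinv : (Matrix.diagonal fun i => x - κ i)⁻¹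
      = Matrix.diagonal (fun i => (x - κ i)⁻¹) :=
    Matrix.inv_eq_right_inv (by
      rw [Matrix.diagonal_mul_diagonal]
      convert Matrix.diagonal_one using 2
      funext i
      exact mul_inv_cancel₀ (hx i))
  rw [Matrix.det_fromBlocks₁₁]
  rw [Matrix.invOf_eq_nonsing_inv, hinv]
  rw [Matrix.det_diagonal, Matrix.det_unique]
  have hentry : ((Matrix.of fun (_ : Unit) (_ : Unit) => x - Λnn) -
      (Matrix.of fun (_ : Unit) j => -Λn j) * Matrix.diagonal (fun i => (x - κ i)⁻¹) *
        (Matrix.of fun i (_ : Unit) => -Λn i)) default default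
      = (x - Λnn) - ∑ γ, (Λn γ)^2 * (x - κ γ)⁻¹ := by
    simp only [Matrix.sub_apply, Matrix.of_apply, Matrix.mul_apply, Matrix.diagonal_apply,
      mul_ite, mul_zero, Finset.sum_ite_eq, Finset.mem_univ, if_true]
    congr 1
    refine Finset.sum_congr rfl fun γ _ => ?_
    rw [Finset.sum_ite_eq' Finset.univ γ (fun i => -Λn i * (x - κ i)⁻¹)]
    simp
    ring
  rw [hentry, mul_sub, Finset.mul_sum]
  congr 1
  refine Finset.sum_congr rfl fun γ _ => ?_
  rw [← Finset.mul_prod_erase _ _ (Finset.mem_univ γ)]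
  field_simp [hx γ]

lemma det_smul_one_sub {n : Type*} [Fintype n] [DecidableEq n] (A : Matrix n n ℝ)
    (hA : A.IsHermitian) (x : ℝ) :
    (x • (1 : Matrix n n ℝ) - A).det = ∏ i, (x - hA.eigenvalues i) := by
  set U : Matrix n n ℝ := (hA.eigenvectorUnitary : Matrix n n ℝ) with hUdef
  have hU : U * star U = 1 := (Matrix.mem_unitaryGroup_iff).mp hA.eigenvectorUnitary.2
  have hdiag : Matrix.diagonal ((RCLike.ofReal : ℝ → ℝ) ∘ hA.eigenvalues)
      = Matrix.diagonal hA.eigenvalues := by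
    congr 1
  have hspec : A = U * Matrix.diagonal hA.eigenvalues * star U := by
    rw [hUdef, ← hdiag]; exact hA.spectral_theorem
  have key : x • (1 : Matrix n n ℝ) - A
      = U * (x • (1 : Matrix n n ℝ) - Matrix.diagonal hA.eigenvalues) * star U := by
    rw [Matrix.mul_sub, Matrix.sub_mul, Matrix.mul_smul, Matrix.mul_one, Matrix.smul_mul, hU,
      ← hspec]
  have hdd : x • (1 : Matrix n n ℝ) - Matrix.diagonal hA.eigenvalues
      = Matrix.diagonal (fun i => x - hA.eigenvalues i) := by
    ext i j
    by_cases h : i = j <;> simp [h, Matrix.diagonal_apply, Matrix.one_apply]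
  rw [key, hdd, Matrix.det_mul, Matrix.det_mul, mul_comm, ← mul_assoc, ← Matrix.det_mul]
  have hU' : star U * U = 1 := (Matrix.mem_unitaryGroup_iff').mp hA.eigenvectorUnitary.2
  rw [hU', Matrix.det_one, one_mul, Matrix.det_diagonal]

end Aux

open Polynomial Finset Matrix in
/-- For a symmetric block matrix `Λ` with diagonal upper-left block `diag(κ'_1,…,κ'_{p})`,
last diagonal entry `Λ_{nn}` and off-diagonal column `Λ_{γn}`, the `m`-th elementary symmetric
polynomial of the eigenvalues of `Λ` equals
`σ_{m-1}(κ')·Λ_{nn} + σ_m(κ') − Σ_γ σ_{m-2}(κ'|γ)·Λ_{γn}²`. -/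
theorem stmt2 (p : ℕ) (κ : Fin p → ℝ) (Λn : Fin p → ℝ) (Λnn : ℝ) (m : ℕ)
    (Λ : Matrix (Fin p ⊕ Unit) (Fin p ⊕ Unit) ℝ)
    (hΛ : Λ = Matrix.fromBlocks (Matrix.diagonal κ) (Matrix.of fun i (_ : Unit) => Λn i)
      (Matrix.of fun (_ : Unit) j => Λn j) (Matrix.of fun (_ : Unit) (_ : Unit) => Λnn))
    (hherm : Λ.IsHermitian) :
    esymm Finset.univ hherm.eigenvalues m
      = esymmZ Finset.univ κ ((m : ℤ) - 1) * Λnn + esymm Finset.univ κ m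
        - ∑ γ : Fin p, esymmZ (Finset.univ.erase γ) κ ((m : ℤ) - 2) * (Λn γ) ^ 2 := by
  set μ : Fin p ⊕ Unit → ℝ := hherm.eigenvalues with hμ
  set P : ℝ[X] := ∏ i : Fin p ⊕ Unit, (X - C (μ i)) with hP
  set R : ℝ[X] := ∏ i : Fin p, (X - C (κ i)) with hR
  set Q : ℝ[X] := R * (X - C Λnn)
      - ∑ γ : Fin p, C ((Λn γ)^2) * ∏ i ∈ Finset.univ.erase γ, (X - C (κ i)) with hQ
  -- the two polynomials agree
  have hPQ : P = Q := by
    apply Polynomial.eq_of_infinite_eval_eq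
    apply Set.Infinite.mono (s := (Set.range κ)ᶜ)
    · intro x hx
      have hx' : ∀ i, x - κ i ≠ 0 := by
        intro i h
        exact hx ⟨i, by linarith⟩
      have e1 : P.eval x = ∏ i, (x - μ i) := by
        simp [hP, eval_prod]
      have e2 : x • (1 : Matrix (Fin p ⊕ Unit) (Fin p ⊕ Unit) ℝ) - Λ
          = Matrix.fromBlocks (Matrix.diagonal fun i => x - κ i)
            (Matrix.of fun i (_ : Unit) => -Λn i) (Matrix.of fun (_ : Unit) j => -Λn j)
            (Matrix.of fun (_ : Unit) (_ : Unit) => x - Λnn) := by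
        subst hΛ
        ext i j
        rcases i with i | i <;> rcases j with j | j
        · by_cases h : i = j <;> simp [h, Matrix.one_apply, Matrix.diagonal_apply]
        · simp [Matrix.one_apply]
        · simp [Matrix.one_apply]
        · simp [Matrix.one_apply]
      have e3 : (x • (1 : Matrix (Fin p ⊕ Unit) (Fin p ⊕ Unit) ℝ) - Λ).det
          = ∏ i, (x - μ i) := det_smul_one_sub Λ hherm x
      have e4 : Q.eval x = (∏ i, (x - κ i)) * (x - Λnn)
          - ∑ γ, (Λn γ)^2 * ∏ i ∈ Finset.univ.erase γ, (x - κ i) := by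
        simp [hQ, hR, eval_prod, eval_finset_sum]
      rw [Set.mem_setOf_eq, e1, e4, ← e3, e2, det_aux p κ Λn Λnn x hx']
    · exact (Set.finite_range κ).infinite_compl
  -- cardinalities
  have hcard : (Finset.univ : Finset (Fin p ⊕ Unit)).card = p + 1 := by simp
  have hcardp : (Finset.univ : Finset (Fin p)).card = p := by simp
  -- trivial cases
  rcases Nat.eq_zero_or_pos m with hm0 | hm1
  · subst hm0
    rw [esymm_zero', esymm_zero', esymmZ_neg' _ _ (by norm_num)]
    have hs : (∑ γ : Fin p, esymmZ (Finset.univ.erase γ) κ (((0:ℕ) : ℤ) - 2) * (Λn γ)^2) = 0 :=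
      Finset.sum_eq_zero fun γ _ => by rw [esymmZ_neg' _ _ (by norm_num), zero_mul]
    rw [hs]; ring
  rcases Nat.lt_or_ge (p + 1) m with hmbig | hm2
  · -- m ≥ p + 2 : everything vanishes
    have l1 : esymm Finset.univ μ m = 0 := esymm_eq_zero _ _ (by omega)
    have l2 : esymm Finset.univ κ m = 0 := esymm_eq_zero _ _ (by omega)
    have l3 : esymmZ Finset.univ κ ((m : ℤ) - 1) = 0 := by
      rw [esymmZ_nonneg _ _ (show ((m:ℤ) - 1) = ((m - 1 : ℕ) : ℤ) by omega)]
      exact esymm_eq_zero _ _ (by omega)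
    have l4 : ∀ γ : Fin p, esymmZ (Finset.univ.erase γ) κ ((m : ℤ) - 2) = 0 := by
      intro γ
      have hγp : 0 < p := γ.pos
      rw [esymmZ_nonneg _ _ (show ((m:ℤ) - 2) = ((m - 2 : ℕ) : ℤ) by omega)]
      apply esymm_eq_zero
      rw [Finset.card_erase_of_mem (Finset.mem_univ γ), hcardp]
      omega
    rw [l1, l2, l3]
    rw [Finset.sum_congr rfl fun γ _ => by rw [l4 γ, zero_mul]]
    simp
  · -- main case : 1 ≤ m ≤ p + 1
    set k : ℕ := p + 1 - m with hk
    -- coefficient of P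
    have hPc : P.coeff k = (-1 : ℝ)^m * esymm Finset.univ μ m := by
      rw [hP, coeff_prod_X_sub_C _ _ (by rw [hcard]; omega), hcard,
        show p + 1 - k = m by omega]
    -- coefficients of R
    have hRc : ∀ j : ℕ, j ≤ p →
        R.coeff j = (-1 : ℝ)^(p - j) * esymm Finset.univ κ (p - j) := by
      intro j hj
      rw [hR, coeff_prod_X_sub_C _ _ (by rw [hcardp]; omega), hcardp]
    -- coefficient of R * (X - C Λnn)
    have hAc : (R * (X - C Λnn)).coeff k
        = (-1 : ℝ)^m * (esymm Finset.univ κ m + esymm Finset.univ κ (m - 1) * Λnn) := by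
      have expand : R * (X - C Λnn) = R * X - R * C Λnn := by ring
      rcases Nat.eq_or_lt_of_le hm2 with hmp | hmp
      · -- m = p + 1, k = 0
        have hk0 : k = 0 := by omega
        rw [hk0, Polynomial.mul_coeff_zero]
        have h1 : (X - C Λnn).coeff 0 = -Λnn := by simp
        have h2 : R.coeff 0 = (-1 : ℝ)^p * esymm Finset.univ κ p := by
          simpa using hRc 0 (by omega)
        have h3 : esymm Finset.univ κ m = 0 := esymm_eq_zero _ _ (by omega)
        rw [h1, h2, h3, show m - 1 = p by omega, show m = p + 1 by omega]
        ring
      · -- m ≤ p, k ≥ 1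
        have hk1 : 1 ≤ k := by omega
        have hsgn : (-1 : ℝ)^m = -(-1 : ℝ)^(m - 1) := by
          conv_lhs => rw [show m = (m - 1) + 1 by omega]
          rw [pow_add]; ring
        rw [expand, Polynomial.coeff_sub, Polynomial.coeff_mul_C,
          show k = (k - 1) + 1 by omega, Polynomial.coeff_mul_X]
        rw [hRc (k - 1) (by omega), hRc ((k - 1) + 1) (by omega),
          show p - (k - 1) = m by omega, show p - ((k - 1) + 1) = m - 1 by omega, hsgn]
        ring
    -- coefficients of the erased products
    have hBc : ∀ γ : Fin p, (∏ i ∈ Finset.univ.erase γ, (X - C (κ i))).coeff k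
        = (-1 : ℝ)^m * esymmZ (Finset.univ.erase γ) κ ((m : ℤ) - 2) := by
      intro γ
      have hγp : 0 < p := γ.pos
      have hce : (Finset.univ.erase γ).card = p - 1 := by
        rw [Finset.card_erase_of_mem (Finset.mem_univ γ), hcardp]
      rcases Nat.eq_or_lt_of_le hm1 with hm1' | hm1'
      · -- m = 1 : degree too small
        have hdeg : (∏ i ∈ Finset.univ.erase γ, (X - C (κ i))).natDegree < k := by
          rw [natDegree_prod_X_sub_C', hce]; omega
        rw [Polynomial.coeff_eq_zero_of_natDegree_lt hdeg,
          esymmZ_neg' _ _ (by omega), mul_zero]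
      · -- m ≥ 2
        have hsgn2 : (-1 : ℝ)^(m - 2) = (-1 : ℝ)^m := by
          conv_rhs => rw [show m = (m - 2) + 2 by omega]
          rw [pow_add]; norm_num
        rw [coeff_prod_X_sub_C _ _ (by rw [hce]; omega), hce,
          show p - 1 - k = m - 2 by omega,
          esymmZ_nonneg _ _ (show ((m:ℤ) - 2) = ((m - 2 : ℕ) : ℤ) by omega), hsgn2]
    -- coefficient of Q
    have hQc : Q.coeff k = (-1 : ℝ)^m * (esymm Finset.univ κ m
        + esymm Finset.univ κ (m - 1) * Λnn
        - ∑ γ : Fin p, esymmZ (Finset.univ.erase γ) κ ((m : ℤ) - 2) * (Λn γ)^2) := by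
      rw [hQ, Polynomial.coeff_sub, Polynomial.finset_sum_coeff]
      rw [Finset.sum_congr rfl fun γ _ => by
        rw [Polynomial.coeff_C_mul, hBc γ]]
      rw [hAc]
      have hrw : ∀ γ : Fin p,
          (Λn γ)^2 * ((-1 : ℝ)^m * esymmZ (Finset.univ.erase γ) κ ((m : ℤ) - 2))
          = (-1 : ℝ)^m * (esymmZ (Finset.univ.erase γ) κ ((m : ℤ) - 2) * (Λn γ)^2) :=
        fun γ => by ring
      rw [Finset.sum_congr rfl fun γ _ => hrw γ, ← Finset.mul_sum]
      ring
    have hone : (-1 : ℝ)^m * (-1 : ℝ)^m = 1 := by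
      rw [← pow_add]
      exact Even.neg_one_pow ⟨m, rfl⟩
    have : esymm Finset.univ μ m = (-1 : ℝ)^m * Q.coeff k := by
      rw [← hPQ, hPc, ← mul_assoc, hone, one_mul]
    rw [this, hQc, ← mul_assoc, hone, one_mul,
      esymmZ_nonneg _ _ (show ((m:ℤ) - 1) = ((m - 1 : ℕ) : ℤ) by omega)]
    ring
end

section
/- For positive reals κ_1 ≥ κ_2 ≥ ... ≥ κ_n and 1 ≤ k ≤ n, there exists a constant η_0 > 0 depending only on n and k such that σ_k^{11}(κ)·κ_1 ≥ η_0·σ_k(κ), where σ_k^{11}(κ) = σ_{k-1}(κ_2,...,κ_n) is the partial derivative of σ_k with respect to κ_1. -/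
section Esymm

variable {ι : Type*} [DecidableEq ι] {s : Finset ι} {f : ι → ℝ}

theorem prod_le_esymm (hf : ∀ i ∈ s, 0 ≤ f i) {j : ℕ} {T : Finset ι}
    (hT : T ∈ s.powersetCard j) : ∏ i ∈ T, f i ≤ esymm s f j :=
  Finset.single_le_sum (f := fun t => ∏ i ∈ t, f i)
    (fun _ ht => Finset.prod_nonneg fun i hi => hf i ((Finset.mem_powersetCard.1 ht).1 hi)) hT

theorem prod_le_mul_esymm_erase (hf : ∀ i ∈ s, 0 ≤ f i) {a : ι} (ha : a ∈ s)
    (hmax : ∀ i ∈ s, f i ≤ f a) {k : ℕ} (hk : 1 ≤ k) {T : Finset ι}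
    (hT : T ∈ s.powersetCard k) : ∏ i ∈ T, f i ≤ f a * esymm (s.erase a) f (k - 1) := by
  obtain ⟨hTs, hTcard⟩ := Finset.mem_powersetCard.1 hT
  have hf' : ∀ i ∈ s.erase a, 0 ≤ f i := fun i hi => hf i (Finset.mem_of_mem_erase hi)
  obtain ⟨b, hbT, hTb⟩ : ∃ b ∈ T, T.erase b ⊆ s.erase a := by
    by_cases haT : a ∈ T
    · exact ⟨a, haT, Finset.erase_subset_erase a hTs⟩
    · obtain ⟨b, hbT⟩ : T.Nonempty := Finset.card_pos.1 (hTcard ▸ hk)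
      refine ⟨b, hbT, fun i hi => Finset.mem_erase.2 ⟨?_, hTs (Finset.mem_of_mem_erase hi)⟩⟩
      rintro rfl
      exact haT (Finset.mem_of_mem_erase hi)
  have hTb_mem : T.erase b ∈ (s.erase a).powersetCard (k - 1) :=
    Finset.mem_powersetCard.2 ⟨hTb, by rw [Finset.card_erase_of_mem hbT, hTcard]⟩
  rw [← Finset.mul_prod_erase T f hbT]
  exact mul_le_mul (hmax b (hTs hbT)) (prod_le_esymm hf' hTb_mem)
    (Finset.prod_nonneg fun i hi => hf' i (hTb hi)) (hf a ha)

theorem esymm_le_choose_mul_esymm_erase (hf : ∀ i ∈ s, 0 ≤ f i) {a : ι} (ha : a ∈ s)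
    (hmax : ∀ i ∈ s, f i ≤ f a) {k : ℕ} (hk : 1 ≤ k) :
    esymm s f k ≤ s.card.choose k * (f a * esymm (s.erase a) f (k - 1)) := by
  have := Finset.sum_le_card_nsmul _ _ _ fun T hT => prod_le_mul_esymm_erase hf ha hmax hk hT
  rwa [Finset.card_powersetCard, nsmul_eq_mul] at this

end Esymm

/-- For positive reals `κ_1 ≥ κ_2 ≥ … ≥ κ_n` and `1 ≤ k ≤ n`, there is a constant `η₀ > 0`
depending only on `n` and `k` such that `σ_k^{11}(κ)·κ_1 ≥ η₀·σ_k(κ)`, where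
`σ_k^{11}(κ) = σ_{k-1}(κ_2,…,κ_n)`. -/
theorem stmt3 (n k : ℕ) (hn : 1 ≤ n) (hk1 : 1 ≤ k) (hkn : k ≤ n) :
    ∃ η₀ > (0 : ℝ), ∀ κ : Fin n → ℝ, (∀ i, 0 < κ i) →
      (∀ i j : Fin n, i ≤ j → κ j ≤ κ i) →
      esymm (Finset.univ.erase (⟨0, hn⟩ : Fin n)) κ (k - 1) * κ ⟨0, hn⟩
        ≥ η₀ * esymm Finset.univ κ k := by
  have hchoose : 0 < (n.choose k : ℝ) := by exact_mod_cast Nat.choose_pos hkn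
  refine ⟨(n.choose k : ℝ)⁻¹, inv_pos.2 hchoose, fun κ hpos hmono => ?_⟩
  have hbound := esymm_le_choose_mul_esymm_erase (s := Finset.univ) (fun i _ => (hpos i).le)
    (Finset.mem_univ _) (fun i _ => hmono ⟨0, hn⟩ i (Nat.zero_le _)) hk1
  rw [Finset.card_univ, Fintype.card_fin] at hbound
  rw [ge_iff_le, inv_mul_le_iff₀ hchoose, mul_comm (esymm _ κ _)]
  exact hbound
end
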